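/- arXiv:math/9811050 — 2 statements merged into one kernel-verified Lean document; each statement's English description precedes it below -/
import Mathlib

section
/- Assume η^s ≠ 1 for s = 1,…,ℓ and let λ, μ ∈ P_{ℓ,n}. If the coordinates of x◁μ are pairwise distinct and it is not the case that λ ≥ μ, then P_λ(x◁μ;x;y;η) = 0. If the coordinates of y▷μ are pairwise distinct and it is not the case that λ ≤ μ, then P_λ(y▷μ;x;y;η) = 0. -/
noncomputable section
open Finset

namespace PvanAux

lemma getD_flatMap {α : Type*} (g : α → List ℂ) :
    ∀ (ms : List α) (j r : ℕ) (hj : j < ms.length), r < (g ms[j]).length →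
      (ms.flatMap g).getD ((((ms.take j).map (fun i => (g i).length)).sum) + r) 0
        = (g ms[j]).getD r 0 := by
  intro ms
  induction ms with
  | nil => intro j r hj; simp at hj
  | cons a tl ih =>
    intro j r hj hr
    cases j with
    | zero =>
      simp only [List.take_zero, List.map_nil, List.sum_nil, Nat.zero_add,
        List.flatMap_cons, List.getElem_cons_zero] at hr ⊢
      rw [List.getD_append _ _ _ _ hr]
    | succ j =>
      simp only [List.take_succ_cons, List.map_cons, List.sum_cons, List.flatMap_cons,
        List.getElem_cons_succ] at hr ⊢
      rw [Nat.add_assoc, List.getD_append_right _ _ _ _ (Nat.le_add_right _ _),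
        Nat.add_sub_cancel_left]
      exact ih j r (by simpa using hj) hr

variable {n : ℕ} (w : Fin n → ℕ)

def offs (m : ℕ) : ℕ := (((List.finRange n).take m).map fun i => w i).sum

lemma offs_zero : offs w 0 = 0 := by simp [offs]

lemma offs_succ {m : ℕ} (h : m < n) : offs w (m + 1) = offs w m + w ⟨m, h⟩ := by
  unfold offs
  rw [List.take_succ, List.getElem?_eq_getElem (by simpa using h)]
  simp [List.getElem_finRange]

lemma offs_stable {m : ℕ} (h : n ≤ m) : offs w m = offs w n := by
  unfold offs
  rw [List.take_of_length_le (by simpa using h), List.take_of_length_le (by simp)]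

lemma offs_le_succ (m : ℕ) : offs w m ≤ offs w (m + 1) := by
  rcases Nat.lt_or_ge m n with h | h
  · rw [offs_succ w h]; exact Nat.le_add_right _ _
  · rw [offs_stable w h, offs_stable w (m := m + 1) (by omega)]

lemma offs_mono : Monotone (offs w) := by
  intro a b hab
  induction b with
  | zero => interval_cases a; rfl
  | succ b ih =>
    rcases Nat.lt_or_ge a (b + 1) with h | h
    · exact le_trans (ih (Nat.lt_succ_iff.mp h)) (offs_le_succ w b)
    · have : a = b + 1 := by omega
      subst this; rfl

lemma offs_total : offs w n = ∑ i : Fin n, w i := by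
  unfold offs
  rw [List.take_of_length_le (by simp), Fin.sum_univ_def]

lemma decomp_lt {m : Fin n} {r : ℕ} (hr : r < w m) : offs w m + r < offs w n := by
  have h1 : offs w ((m : ℕ) + 1) = offs w m + w m := by
    rw [offs_succ w m.isLt]
  have h2 := offs_mono w (show (m : ℕ) + 1 ≤ n from m.isLt)
  omega

lemma exists_decomp : ∀ k, k ≤ n → ∀ i, i < offs w k →
    ∃ (m : Fin n) (r : ℕ), r < w m ∧ (m : ℕ) < k ∧ i = offs w (m : ℕ) + r := by
  intro k
  induction k with
  | zero => intro _ i hi; rw [offs_zero] at hi; omega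
  | succ k ih =>
    intro hk i hi
    rcases Nat.lt_or_ge i (offs w k) with h | h
    · obtain ⟨m, r, h1, h2, h3⟩ := ih (by omega) i h
      exact ⟨m, r, h1, by omega, h3⟩
    · have hkn : k < n := hk
      rw [offs_succ w hkn] at hi
      refine ⟨⟨k, hkn⟩, i - offs w k, by omega, by simp, ?_⟩
      show i = offs w k + (i - offs w k)
      omega

lemma decomp_unique {m m' : Fin n} {r r' : ℕ} (hr : r < w m) (hr' : r' < w m')
    (he : offs w m + r = offs w m' + r') : m = m' ∧ r = r' := by
  rcases lt_trichotomy (m : ℕ) (m' : ℕ) with hlt | heq | hgt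
  · exfalso
    have h1 : offs w ((m : ℕ) + 1) = offs w m + w m := offs_succ w m.isLt
    have h2 := offs_mono w (show (m : ℕ) + 1 ≤ (m' : ℕ) from hlt)
    omega
  · refine ⟨Fin.ext heq, ?_⟩
    rw [heq] at he; omega
  · exfalso
    have h1 : offs w ((m' : ℕ) + 1) = offs w m' + w m' := offs_succ w m'.isLt
    have h2 := offs_mono w (show (m' : ℕ) + 1 ≤ (m : ℕ) from hgt)
    omega

lemma getD_eq (g : Fin n → List ℂ) (hlen : ∀ i, (g i).length = w i)
    {m : Fin n} {r : ℕ} (hr : r < w m) :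
    ((List.finRange n).flatMap g).getD (offs w m + r) 0 = (g m).getD r 0 := by
  have h' : (m : ℕ) < (List.finRange n).length := by simpa using m.isLt
  have hm : (List.finRange n)[(m : ℕ)] = m := by simp [List.getElem_finRange]
  have key := getD_flatMap g (List.finRange n) m r h' (by rw [hm, hlen]; exact hr)
  rw [hm] at key
  rw [← key]
  unfold offs
  have heq : (List.map (fun i => w i) (List.take (↑m) (List.finRange n))).sum
      = (List.map (fun i => (g i).length) (List.take (↑m) (List.finRange n))).sum :=
    congrArg List.sum (List.map_congr_left fun i _ => (hlen i).symm)
  rw [heq]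

end PvanAux

/-- `ω_{k,λ}`: the number of parts of `λ` equal to `k`. -/
def om {ℓ : ℕ} (l : Fin ℓ → ℕ) (k : ℕ) : ℕ :=
  (Finset.univ.filter fun a : Fin ℓ => l a = k).card

/-- The set `P_{ℓ,n}` of partitions `λ = (λ_1 ≥ … ≥ λ_ℓ)` with `n ≥ λ_1`, `λ_ℓ ≥ 1`,
encoded as functions `Fin ℓ → ℕ` (so `λ_a = l a` for the `a`-th part, `a` zero-based). -/
def PlnF (ℓ n : ℕ) : Finset (Fin ℓ → ℕ) :=
  (Fintype.piFinset fun _ : Fin ℓ => Finset.range (n + 1)).filter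
    fun l => (∀ a, 1 ≤ l a) ∧ ∀ a b : Fin ℓ, a ≤ b → l b ≤ l a

/-- The pairs `(a, b)` with `a < b`. -/
def pairsLT (ℓ : ℕ) : Finset (Fin ℓ × Fin ℓ) :=
  Finset.univ.filter fun p => p.1 < p.2

/-- `X_m(u;x;y) = u·∏_{1≤j<m}(u − y_j)·∏_{m<k≤n}(u − x_k)` (indices `1`-based). -/
def Xf {n : ℕ} (x y : Fin n → ℂ) (m : ℕ) (u : ℂ) : ℂ :=
  u * (∏ j ∈ Finset.univ.filter (fun j : Fin n => (j : ℕ) + 1 < m), (u - y j)) *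
    ∏ k ∈ Finset.univ.filter (fun k : Fin n => m < (k : ℕ) + 1), (u - x k)

/-- `X'_m(u;x;y) = ∏_{1≤j<m}(u − x_j)·∏_{m<k≤n}(u − y_k)` (indices `1`-based). -/
def Xf' {n : ℕ} (x y : Fin n → ℂ) (m : ℕ) (u : ℂ) : ℂ :=
  (∏ j ∈ Finset.univ.filter (fun j : Fin n => (j : ℕ) + 1 < m), (u - x j)) *
    ∏ k ∈ Finset.univ.filter (fun k : Fin n => m < (k : ℕ) + 1), (u - y k)

/-- `r_λ(η) = ∏_{m=1}^{n} ∏_{s=1}^{ω_{m,λ}} (1 − η)/(1 − η^s)`. -/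
def rf {ℓ : ℕ} (n : ℕ) (l : Fin ℓ → ℕ) (η : ℂ) : ℂ :=
  ∏ m : Fin n, ∏ s ∈ Finset.range (om l ((m : ℕ) + 1)), (1 - η) / (1 - η ^ (s + 1))

/-- The polynomial `P_λ(t;x;y;η)`. -/
def Pp {ℓ n : ℕ} (l : Fin ℓ → ℕ) (t : Fin ℓ → ℂ) (x y : Fin n → ℂ) (η : ℂ) : ℂ :=
  rf n l η * ∑ σ : Equiv.Perm (Fin ℓ),
    (∏ a, Xf x y (l a) (t (σ a))) *
      ∏ p ∈ pairsLT ℓ, (t (σ p.1) - η * t (σ p.2)) / (t (σ p.1) - t (σ p.2))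

/-- The polynomial `P'_λ(t;x;y;η)`. -/
def Pp' {ℓ n : ℕ} (l : Fin ℓ → ℕ) (t : Fin ℓ → ℂ) (x y : Fin n → ℂ) (η : ℂ) : ℂ :=
  rf n l η * ∑ σ : Equiv.Perm (Fin ℓ),
    (∏ a, Xf' x y (l a) (t (σ a))) *
      ∏ p ∈ pairsLT ℓ, (η * t (σ p.1) - t (σ p.2)) / (t (σ p.1) - t (σ p.2))

/-- `N_λ = ∏_{m=1}^{n} ∏_{s=1}^{ω_{m,λ}} (1 − η^s)(x_m − η^{s−1} y_m)/(1 − η)`. -/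
def Nf {ℓ n : ℕ} (l : Fin ℓ → ℕ) (x y : Fin n → ℂ) (η : ℂ) : ℂ :=
  ∏ m : Fin n, ∏ s ∈ Finset.range (om l ((m : ℕ) + 1)),
    (1 - η ^ (s + 1)) * (x m - η ^ s * y m) / (1 - η)

/-- `x◁λ`: the concatenation over `m = 1,…,n` of the blocks
`(η^{1−ω_{m,λ}} x_m, …, η^{0} x_m)`, as a function `Fin ℓ → ℂ`. -/
def xtr {ℓ n : ℕ} (x : Fin n → ℂ) (η : ℂ) (l : Fin ℓ → ℕ) : Fin ℓ → ℂ :=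
  fun a => ((List.finRange n).flatMap fun (m : Fin n) =>
    (List.range (om l ((m : ℕ) + 1))).map fun r =>
      η ^ ((r : ℤ) + 1 - (om l ((m : ℕ) + 1) : ℤ)) * x m).getD a 0

/-- `y▷λ`: the concatenation over `m = 1,…,n` of the blocks
`(η^{ω_{m,λ}−1} y_m, …, η^{0} y_m)`, as a function `Fin ℓ → ℂ`. -/
def ytr {ℓ n : ℕ} (y : Fin n → ℂ) (η : ℂ) (l : Fin ℓ → ℕ) : Fin ℓ → ℂ :=
  fun a => ((List.finRange n).flatMap fun (m : Fin n) =>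
    (List.range (om l ((m : ℕ) + 1))).map fun r =>
      η ^ ((om l ((m : ℕ) + 1) : ℤ) - 1 - (r : ℤ)) * y m).getD a 0

/-- **Vanishing lemma for `P_λ` (Lemma Pxy, first part).**
`P_λ(x◁μ) = 0` unless `λ ≥ μ`, and `P_λ(y▷μ) = 0` unless `λ ≤ μ`. -/
theorem P_vanishing (ℓ n : ℕ) (x y : Fin n → ℂ) (η : ℂ)
    (hη : ∀ s : ℕ, 1 ≤ s → s ≤ ℓ → η ^ s ≠ 1)
    (lam mu : Fin ℓ → ℕ) (hlam : lam ∈ PlnF ℓ n) (hmu : mu ∈ PlnF ℓ n) :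
    (Function.Injective (xtr x η mu) → ¬(∀ a, mu a ≤ lam a) →
      Pp lam (xtr x η mu) x y η = 0) ∧
    (Function.Injective (ytr y η mu) → ¬(∀ a, lam a ≤ mu a) →
      Pp lam (ytr y η mu) x y η = 0) := by
  classical
  clear hη
  simp only [PlnF, Finset.mem_filter, Fintype.mem_piFinset, Finset.mem_range] at hlam hmu
  obtain ⟨hlam_bd, hlam_pos, hlam_anti⟩ := hlam
  obtain ⟨hmu_bd, hmu_pos, hmu_anti⟩ := hmu
  set w : Fin n → ℕ := fun m => om mu ((m : ℕ) + 1) with hw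
  have hwm : ∀ m : Fin n, om mu ((m : ℕ) + 1) = w m := fun _ => rfl
  have hf : ∀ a : Fin ℓ, mu a - 1 < n := fun a => by
    have h1 := hmu_bd a; have h2 := hmu_pos a; omega
  set F : Fin ℓ → Fin n := fun a => ⟨mu a - 1, hf a⟩ with hF
  have hfibF : ∀ m : Fin n, (univ.filter fun a => F a = m).card = w m := by
    intro m
    unfold w
    unfold om
    congr 1
    ext a
    simp only [mem_filter, mem_univ, true_and, hF, Fin.ext_iff]
    have := hmu_pos a
    omega
  have hsum : ∑ m : Fin n, w m = ℓ := by
    have key := Finset.card_eq_sum_card_fiberwise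
      (f := F) (s := Finset.univ) (t := Finset.univ) (fun a _ => Finset.mem_univ _)
    rw [Finset.card_univ, Fintype.card_fin] at key
    rw [← Finset.sum_congr rfl fun m _ => hfibF m]
    exact key.symm
  have hoffs : PvanAux.offs w n = ℓ := by rw [PvanAux.offs_total]; exact hsum
  -- decomposition
  have hdec : ∀ a : Fin ℓ, ∃ (m : Fin n) (r : ℕ), r < w m ∧ (a : ℕ) = PvanAux.offs w (m : ℕ) + r := by
    intro a
    obtain ⟨m, r, h1, _, h3⟩ := PvanAux.exists_decomp w n le_rfl a (by rw [hoffs]; exact a.isLt)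
    exact ⟨m, r, h1, h3⟩
  choose B R hR1 hR2 using hdec
  have huniq : ∀ (a : Fin ℓ) (m : Fin n) (r : ℕ), r < w m →
      (a : ℕ) = PvanAux.offs w (m : ℕ) + r → B a = m ∧ R a = r := by
    intro a m r hr he
    exact PvanAux.decomp_unique w (hR1 a) hr (by rw [← hR2 a, he])
  have hmk : ∀ (m : Fin n) (r : ℕ), r < w m → ∃ a : Fin ℓ, B a = m ∧ R a = r := by
    intro m r hr
    have hlt : PvanAux.offs w (m : ℕ) + r < ℓ := by
      rw [← hoffs]; exact PvanAux.decomp_lt w hr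
    exact ⟨⟨_, hlt⟩, huniq _ m r hr rfl⟩
  have haeq : ∀ a a' : Fin ℓ, B a = B a' → R a = R a' → a = a' := by
    intro a a' h1 h2
    apply Fin.ext
    rw [hR2 a, hR2 a', h1, h2]
  have hfibB : ∀ m : Fin n, (univ.filter fun a => B a = m).card = w m := by
    intro m
    rw [← Finset.card_range (w m)]
    symm
    apply Finset.card_bij (fun r hr => (⟨PvanAux.offs w (m : ℕ) + r, by
      rw [← hoffs]; exact PvanAux.decomp_lt w (Finset.mem_range.mp hr)⟩ : Fin ℓ))
    · intro r hr
      simp only [mem_filter, mem_univ, true_and]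
      exact (huniq _ m r (Finset.mem_range.mp hr) rfl).1
    · intro r hr r' hr' he
      have := congrArg Fin.val he
      simpa using this
    · intro a ha
      simp only [mem_filter, mem_univ, true_and] at ha
      refine ⟨R a, Finset.mem_range.mpr (by rw [← ha]; exact hR1 a), ?_⟩
      apply Fin.ext
      simp [← ha, ← hR2 a]
  -- counting lemmas
  have hcount : ∀ (h : Fin ℓ → Fin n) (pr : Fin n → Prop) [DecidablePred pr],
      (∀ m, (univ.filter fun a => h a = m).card = w m) →
      (univ.filter fun a => pr (h a)).card = ∑ m ∈ univ.filter pr, w m := by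
    intro h pr _ hfib
    rw [Finset.card_eq_sum_card_fiberwise (f := h) (t := univ.filter pr)
      (fun a ha => by simp only [Finset.mem_coe, mem_filter, mem_univ, true_and] at ha ⊢; exact ha)]
    refine Finset.sum_congr rfl fun m hm => ?_
    simp only [mem_filter, mem_univ, true_and] at hm
    rw [← hfib m]
    congr 1
    ext a
    simp only [mem_filter, mem_univ, true_and]
    constructor
    · rintro ⟨_, h2⟩; exact h2
    · intro h2; exact ⟨by rw [h2]; exact hm, h2⟩
  have hperm : ∀ (σ : Equiv.Perm (Fin ℓ)) (Q : Fin ℓ → Prop) [DecidablePred Q],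
      (univ.filter fun c => Q (σ c)).card = (univ.filter Q).card := by
    intro σ Q _
    apply Finset.card_bij (fun c _ => σ c)
    · intro c hc
      simp only [mem_filter, mem_univ, true_and] at hc ⊢
      exact hc
    · intro a _ b _ h
      exact σ.injective h
    · intro b hb
      simp only [mem_filter, mem_univ, true_and] at hb
      exact ⟨σ.symm b, by simp only [mem_filter, mem_univ, true_and,
        Equiv.apply_symm_apply]; exact hb, by simp⟩
  have hseg : ∀ j : ℕ, j ≤ ℓ → (univ.filter fun c : Fin ℓ => (c : ℕ) < j).card = j := by
    intro j hj
    have key : Finset.card (Finset.range j) = (univ.filter fun c : Fin ℓ => (c : ℕ) < j).card := by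
      apply Finset.card_bij (fun i hi => (⟨i, by
          have := Finset.mem_range.mp hi; omega⟩ : Fin ℓ))
      · intro i hi
        simp only [mem_filter, mem_univ, true_and]
        exact Finset.mem_range.mp hi
      · intro i hi i' hi' he
        simpa using congrArg Fin.val he
      · intro c hc
        simp only [mem_filter, mem_univ, true_and] at hc
        exact ⟨c, Finset.mem_range.mpr hc, by simp⟩
    rw [← key, Finset.card_range]
  have hseg' : ∀ j : ℕ, j ≤ ℓ → (univ.filter fun c : Fin ℓ => j ≤ (c : ℕ)).card = ℓ - j := by
    intro j hj
    have key := Finset.card_filter_add_card_filter_not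
      (s := (univ : Finset (Fin ℓ))) (p := fun c => (c : ℕ) < j)
    rw [Finset.card_univ, Fintype.card_fin, hseg j hj] at key
    have : (univ.filter fun c : Fin ℓ => ¬ (c : ℕ) < j) = univ.filter fun c : Fin ℓ => j ≤ (c : ℕ) := by
      ext c; simp [Nat.not_lt]
    rw [this] at key
    omega
  constructor
  · intro _ hcon
    have htval : ∀ a : Fin ℓ, xtr x η mu a
        = η ^ ((R a : ℤ) + 1 - (w (B a) : ℤ)) * x (B a) := by
      intro a
      simp only [xtr, hwm, List.pure_def, List.bind_eq_flatMap, List.map_flatMap,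
        List.map_cons, List.map_nil, ← List.map_eq_flatMap, List.map_map]
      rw [hR2 a]
      have hlen : ∀ i : Fin n,
          ((List.range (w i)).map
            ((fun r : ℤ => η ^ (r + 1 - (w i : ℤ)) * x i) ∘ (Nat.cast : ℕ → ℤ))).length
            = w i := by
        intro i; rw [List.length_map, List.length_range]
      rw [PvanAux.getD_eq w
        (fun m => (List.range (w m)).map
          ((fun r : ℤ => η ^ (r + 1 - (w m : ℤ)) * x m) ∘ (Nat.cast : ℕ → ℤ)))
        hlen (hR1 a)]
      have hlt2 : R a < ((List.range (w (B a))).map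
          ((fun r : ℤ => η ^ (r + 1 - (w (B a) : ℤ)) * x (B a)) ∘ (Nat.cast : ℕ → ℤ))).length := by
        rw [hlen]; exact hR1 a
      rw [List.getD_eq_getElem _ _ hlt2, List.getElem_map, List.getElem_range]
      rfl
    have hterm : ∀ σ ∈ (univ : Finset (Equiv.Perm (Fin ℓ))),
        (∏ a, Xf x y (lam a) (xtr x η mu (σ a))) *
          ∏ p ∈ pairsLT ℓ, (xtr x η mu (σ p.1) - η * xtr x η mu (σ p.2)) /
            (xtr x η mu (σ p.1) - xtr x η mu (σ p.2)) = 0 := by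
      intro σ _
      by_cases hz : ∃ a, xtr x η mu a = 0
      · obtain ⟨a0, h0⟩ := hz
        apply mul_eq_zero_of_left
        apply Finset.prod_eq_zero (Finset.mem_univ (σ.symm a0))
        rw [Equiv.apply_symm_apply, h0]
        simp [Xf]
      push_neg at hz
      by_cases hA : ∃ a a' : Fin ℓ, B a = B a' ∧ R a = R a' + 1 ∧ σ.symm a < σ.symm a'
      · obtain ⟨a, a', hBe, hRe, hlt⟩ := hA
        apply mul_eq_zero_of_right
        apply Finset.prod_eq_zero (i := (σ.symm a, σ.symm a'))
          (by simp only [pairsLT, Finset.mem_filter]; exact ⟨Finset.mem_univ _, hlt⟩)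
        have hη0 : η ≠ 0 := by
          intro h0
          obtain ⟨a2, hB2, hR2'⟩ := hmk (B a) 0 (by have := hR1 a; omega)
          apply hz a2
          rw [htval a2, hB2, hR2', h0, zero_zpow, zero_mul]
          have h3 := hR1 a
          omega
        have hnum : xtr x η mu a - η * xtr x η mu a' = 0 := by
          rw [htval a, htval a', hBe, hRe]
          rw [show ((R a' + 1 : ℕ) : ℤ) + 1 - (w (B a') : ℤ)
            = 1 + ((R a' : ℤ) + 1 - (w (B a') : ℤ)) by push_cast; ring]
          rw [zpow_add₀ hη0, zpow_one]
          ring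
        simp only [Equiv.apply_symm_apply]
        rw [hnum, zero_div]
      push_neg at hA
      have hstep : ∀ a a' : Fin ℓ, B a = B a' → R a = R a' + 1 → σ.symm a' < σ.symm a := by
        intro a a' h1 h2
        have h3 := hA a a' h1 h2
        have h4 : σ.symm a ≠ σ.symm a' := by
          intro he
          have h5 := σ.symm.injective he
          rw [h5] at h2; omega
        exact lt_of_le_of_ne h3 (Ne.symm h4)
      have hchain : ∀ (d : ℕ) (a a' : Fin ℓ), B a = B a' → R a' = R a + d →
          σ.symm a ≤ σ.symm a' := by
        intro d
        induction d with
        | zero =>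
          intro a a' h1 h2
          rw [haeq a a' h1 (by omega)]
        | succ d ih =>
          intro a a' h1 h2
          have hrm : R a + d < w (B a) := by
            have h3 := hR1 a'; rw [← h1] at h3; omega
          obtain ⟨am, hBm, hRm⟩ := hmk (B a) (R a + d) hrm
          have h3 := hstep a' am (by rw [hBm, h1]) (by rw [hRm]; omega)
          have h4 := ih a am hBm.symm hRm
          exact le_of_lt (lt_of_le_of_lt h4 h3)
      by_cases hT : ∃ c : Fin ℓ, R (σ c) + 1 = w (B (σ c)) ∧ lam c < (B (σ c) : ℕ) + 1
      · obtain ⟨c, hc1, hc2⟩ := hT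
        apply mul_eq_zero_of_left
        apply Finset.prod_eq_zero (Finset.mem_univ c)
        have hv : xtr x η mu (σ c) = x (B (σ c)) := by
          rw [htval]
          rw [show ((R (σ c) : ℤ) + 1 - (w (B (σ c)) : ℤ)) = 0 by omega]
          rw [zpow_zero, one_mul]
        rw [hv]
        unfold Xf
        apply mul_eq_zero_of_right
        apply Finset.prod_eq_zero (i := B (σ c))
          (Finset.mem_filter.mpr ⟨Finset.mem_univ _, hc2⟩)
        exact sub_self _
      · push_neg at hT
        exfalso
        apply hcon
        have hge : ∀ c : Fin ℓ, (B (σ c) : ℕ) + 1 ≤ lam c := by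
          intro c
          have hrm : w (B (σ c)) - 1 < w (B (σ c)) := by have := hR1 (σ c); omega
          obtain ⟨aT, hBT, hRT⟩ := hmk (B (σ c)) (w (B (σ c)) - 1) hrm
          have hle : σ.symm (σ c) ≤ σ.symm aT :=
            hchain (w (B (σ c)) - 1 - R (σ c)) (σ c) aT hBT.symm
              (by rw [hRT]; have := hR1 (σ c); omega)
          rw [Equiv.symm_apply_apply] at hle
          have hcT := hT (σ.symm aT)
          rw [Equiv.apply_symm_apply, hBT, hRT] at hcT
          have h5 : (B (σ c) : ℕ) + 1 ≤ lam (σ.symm aT) := by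
            have h6 := hR1 (σ c)
            have h7 := hcT (by omega)
            omega
          have h6 := hlam_anti c (σ.symm aT) hle
          omega
        intro b
        by_contra hbc
        push_neg at hbc
        have hsub : (univ.filter fun c => mu b ≤ (B (σ c) : ℕ) + 1)
            ⊆ (univ.filter fun c => mu b ≤ lam c) := by
          intro c hc
          simp only [mem_filter, mem_univ, true_and] at hc ⊢
          exact le_trans hc (hge c)
        have hcard1 : (univ.filter fun c => mu b ≤ (B (σ c) : ℕ) + 1).card
            = (univ.filter fun c => mu b ≤ mu c).card := by
          rw [hperm σ (fun a => mu b ≤ (B a : ℕ) + 1)]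
          rw [hcount B (fun m => mu b ≤ (m : ℕ) + 1) hfibB]
          rw [← hcount F (fun m => mu b ≤ (m : ℕ) + 1) hfibF]
          congr 1
          ext c
          simp only [mem_filter, mem_univ, true_and]
          have hval : ((F c : Fin n) : ℕ) = mu c - 1 := rfl
          have := hmu_pos c
          omega
        have hlow : (b : ℕ) + 1 ≤ (univ.filter fun c => mu b ≤ mu c).card := by
          have hsub2 : (univ.filter fun c : Fin ℓ => (c : ℕ) < (b : ℕ) + 1)
              ⊆ (univ.filter fun c => mu b ≤ mu c) := by
            intro c hc
            simp only [mem_filter, mem_univ, true_and] at hc ⊢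
            exact hmu_anti c b (Fin.le_def.mpr (by omega))
          have h8 := Finset.card_le_card hsub2
          rw [hseg ((b : ℕ) + 1) b.isLt] at h8
          exact h8
        have hup : (univ.filter fun c => mu b ≤ lam c).card ≤ (b : ℕ) := by
          have hsub3 : (univ.filter fun c => mu b ≤ lam c)
              ⊆ (univ.filter fun c : Fin ℓ => (c : ℕ) < (b : ℕ)) := by
            intro c hc
            simp only [mem_filter, mem_univ, true_and] at hc ⊢
            by_contra h9
            push_neg at h9
            have := hlam_anti b c (Fin.le_def.mpr h9)
            omega
          have h8 := Finset.card_le_card hsub3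
          rw [hseg (b : ℕ) (le_of_lt b.isLt)] at h8
          exact h8
        have h9 := Finset.card_le_card hsub
        omega
    unfold Pp
    rw [Finset.sum_eq_zero hterm, mul_zero]
  · intro _ hcon
    have htval : ∀ a : Fin ℓ, ytr y η mu a
        = η ^ ((w (B a) : ℤ) - 1 - (R a : ℤ)) * y (B a) := by
      intro a
      simp only [ytr, hwm, List.pure_def, List.bind_eq_flatMap, List.map_flatMap,
        List.map_cons, List.map_nil, ← List.map_eq_flatMap, List.map_map]
      rw [hR2 a]
      have hlen : ∀ i : Fin n,
          ((List.range (w i)).map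
            ((fun r : ℤ => η ^ ((w i : ℤ) - 1 - r) * y i) ∘ (Nat.cast : ℕ → ℤ))).length
            = w i := by
        intro i; rw [List.length_map, List.length_range]
      rw [PvanAux.getD_eq w
        (fun m => (List.range (w m)).map
          ((fun r : ℤ => η ^ ((w m : ℤ) - 1 - r) * y m) ∘ (Nat.cast : ℕ → ℤ)))
        hlen (hR1 a)]
      have hlt2 : R a < ((List.range (w (B a))).map
          ((fun r : ℤ => η ^ ((w (B a) : ℤ) - 1 - r) * y (B a)) ∘ (Nat.cast : ℕ → ℤ))).length := by
        rw [hlen]; exact hR1 a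
      rw [List.getD_eq_getElem _ _ hlt2, List.getElem_map, List.getElem_range]
      rfl
    have htvaln : ∀ a : Fin ℓ, ytr y η mu a
        = η ^ (w (B a) - 1 - R a : ℕ) * y (B a) := by
      intro a
      rw [htval a]
      congr 1
      rw [← zpow_natCast]
      congr 1
      have := hR1 a
      omega
    have hterm : ∀ σ ∈ (univ : Finset (Equiv.Perm (Fin ℓ))),
        (∏ a, Xf x y (lam a) (ytr y η mu (σ a))) *
          ∏ p ∈ pairsLT ℓ, (ytr y η mu (σ p.1) - η * ytr y η mu (σ p.2)) /
            (ytr y η mu (σ p.1) - ytr y η mu (σ p.2)) = 0 := by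
      intro σ _
      by_cases hA : ∃ a a' : Fin ℓ, B a = B a' ∧ R a' = R a + 1 ∧ σ.symm a < σ.symm a'
      · obtain ⟨a, a', hBe, hRe, hlt⟩ := hA
        apply mul_eq_zero_of_right
        apply Finset.prod_eq_zero (i := (σ.symm a, σ.symm a'))
          (by simp only [pairsLT, Finset.mem_filter]; exact ⟨Finset.mem_univ _, hlt⟩)
        have hnum : ytr y η mu a - η * ytr y η mu a' = 0 := by
          rw [htvaln a, htvaln a', ← hBe]
          have hlt3 : R a' < w (B a) := by rw [hBe]; exact hR1 a'
          rw [show w (B a) - 1 - R a = (w (B a) - 1 - R a') + 1 by omega]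
          rw [pow_succ]
          ring
        simp only [Equiv.apply_symm_apply]
        rw [hnum, zero_div]
      push_neg at hA
      have hstep : ∀ a a' : Fin ℓ, B a = B a' → R a' = R a + 1 → σ.symm a' < σ.symm a := by
        intro a a' h1 h2
        have h3 := hA a a' h1 h2
        have h4 : σ.symm a ≠ σ.symm a' := by
          intro he
          have h5 := σ.symm.injective he
          rw [h5] at h2; omega
        exact lt_of_le_of_ne h3 (Ne.symm h4)
      have hchain : ∀ (d : ℕ) (a a' : Fin ℓ), B a = B a' → R a' = R a + d →
          σ.symm a' ≤ σ.symm a := by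
        intro d
        induction d with
        | zero =>
          intro a a' h1 h2
          rw [haeq a a' h1 (by omega)]
        | succ d ih =>
          intro a a' h1 h2
          have hrm : R a + d < w (B a) := by
            have h3 := hR1 a'; rw [← h1] at h3; omega
          obtain ⟨am, hBm, hRm⟩ := hmk (B a) (R a + d) hrm
          have h3 := hstep am a' (by rw [hBm, h1]) (by rw [hRm]; omega)
          have h4 := ih a am hBm.symm hRm
          exact le_of_lt (lt_of_lt_of_le h3 h4)
      by_cases hT : ∃ c : Fin ℓ, R (σ c) + 1 = w (B (σ c)) ∧ (B (σ c) : ℕ) + 1 < lam c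
      · obtain ⟨c, hc1, hc2⟩ := hT
        apply mul_eq_zero_of_left
        apply Finset.prod_eq_zero (Finset.mem_univ c)
        have hv : ytr y η mu (σ c) = y (B (σ c)) := by
          rw [htvaln]
          rw [show w (B (σ c)) - 1 - R (σ c) = 0 by omega]
          rw [pow_zero, one_mul]
        rw [hv]
        unfold Xf
        apply mul_eq_zero_of_left
        apply mul_eq_zero_of_right
        apply Finset.prod_eq_zero (i := B (σ c))
          (Finset.mem_filter.mpr ⟨Finset.mem_univ _, hc2⟩)
        exact sub_self _
      · push_neg at hT
        exfalso
        apply hcon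
        have hge : ∀ c : Fin ℓ, lam c ≤ (B (σ c) : ℕ) + 1 := by
          intro c
          have hrm : w (B (σ c)) - 1 < w (B (σ c)) := by have := hR1 (σ c); omega
          obtain ⟨aT, hBT, hRT⟩ := hmk (B (σ c)) (w (B (σ c)) - 1) hrm
          have hle : σ.symm aT ≤ σ.symm (σ c) :=
            hchain (w (B (σ c)) - 1 - R (σ c)) (σ c) aT hBT.symm
              (by rw [hRT]; have := hR1 (σ c); omega)
          rw [Equiv.symm_apply_apply] at hle
          have hcT := hT (σ.symm aT)
          rw [Equiv.apply_symm_apply, hBT, hRT] at hcT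
          have h5 : lam (σ.symm aT) ≤ (B (σ c) : ℕ) + 1 := by
            have h6 := hR1 (σ c)
            have h7 := hcT (by omega)
            omega
          have h6 := hlam_anti (σ.symm aT) c hle
          omega
        intro b
        by_contra hbc
        push_neg at hbc
        have hsub : (univ.filter fun c => (B (σ c) : ℕ) + 1 ≤ mu b)
            ⊆ (univ.filter fun c => lam c ≤ mu b) := by
          intro c hc
          simp only [mem_filter, mem_univ, true_and] at hc ⊢
          exact le_trans (hge c) hc
        have hcard1 : (univ.filter fun c => (B (σ c) : ℕ) + 1 ≤ mu b).card
            = (univ.filter fun c => mu c ≤ mu b).card := by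
          rw [hperm σ (fun a => (B a : ℕ) + 1 ≤ mu b)]
          rw [hcount B (fun m => (m : ℕ) + 1 ≤ mu b) hfibB]
          rw [← hcount F (fun m => (m : ℕ) + 1 ≤ mu b) hfibF]
          congr 1
          ext c
          simp only [mem_filter, mem_univ, true_and]
          have hval : ((F c : Fin n) : ℕ) = mu c - 1 := rfl
          have := hmu_pos c
          omega
        have hlow : ℓ - (b : ℕ) ≤ (univ.filter fun c => mu c ≤ mu b).card := by
          have hsub2 : (univ.filter fun c : Fin ℓ => (b : ℕ) ≤ (c : ℕ))
              ⊆ (univ.filter fun c => mu c ≤ mu b) := by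
            intro c hc
            simp only [mem_filter, mem_univ, true_and] at hc ⊢
            exact hmu_anti b c (Fin.le_def.mpr hc)
          have h8 := Finset.card_le_card hsub2
          rw [hseg' (b : ℕ) (le_of_lt b.isLt)] at h8
          exact h8
        have hup : (univ.filter fun c => lam c ≤ mu b).card ≤ ℓ - ((b : ℕ) + 1) := by
          have hsub3 : (univ.filter fun c => lam c ≤ mu b)
              ⊆ (univ.filter fun c : Fin ℓ => (b : ℕ) + 1 ≤ (c : ℕ)) := by
            intro c hc
            simp only [mem_filter, mem_univ, true_and] at hc ⊢
            by_contra h9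
            push_neg at h9
            have := hlam_anti c b (Fin.le_def.mpr (by omega))
            omega
          have h8 := Finset.card_le_card hsub3
          rw [hseg' ((b : ℕ) + 1) b.isLt] at h8
          exact h8
        have h9 := Finset.card_le_card hsub
        have h10 := b.isLt
        omega
    unfold Pp
    rw [Finset.sum_eq_zero hterm, mul_zero]
end
end

section
/- Assume η ≠ 0 and η^s ≠ 1 for s = 1,…,ℓ. Then for every λ ∈ P_{ℓ,n} and all pairwise distinct complex t_1,…,t_ℓ one has P_λ(t;x;y;η) = η^{ℓ(ℓ−1)/2 − ∑_{m=1}^{n} ω_{m,λ}(ω_{m,λ}−1)/2} · t_1 ⋯ t_ℓ · P'_λ(t;y;x;η^{−1}). -/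
noncomputable section
open Finset

lemma aux_factor (η : ℂ) (hη0 : η ≠ 0) (s : ℕ) :
    (1 - η) / (1 - η ^ (s + 1)) = η⁻¹ ^ s * ((1 - η⁻¹) / (1 - η⁻¹ ^ (s + 1))) := by
  by_cases h : η ^ (s + 1) = 1
  · have h' : η⁻¹ ^ (s + 1) = 1 := by rw [inv_pow, h, inv_one]
    simp [h, h']
  · have h1 : (1 : ℂ) - η ^ (s + 1) ≠ 0 := sub_ne_zero.2 fun e => h e.symm
    have h2 : (1 : ℂ) - η⁻¹ ^ (s + 1) ≠ 0 := by
      refine sub_ne_zero.2 fun e => h ?_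
      rw [inv_pow, eq_comm, inv_eq_one] at e
      exact e
    rw [mul_div_assoc', div_eq_div_iff h1 h2]
    field_simp
    have e1 : η * η⁻¹ = 1 := mul_inv_cancel₀ hη0
    have e2 : η ^ s * η⁻¹ ^ s = 1 := by rw [← mul_pow, e1, one_pow]
    linear_combination (η * η⁻¹ ^ s - η⁻¹ ^ s) * e1 + (η ^ 2 - η) * e2

lemma aux_rf (n : ℕ) {ℓ : ℕ} (l : Fin ℓ → ℕ) (η : ℂ) (hη0 : η ≠ 0) :
    rf n l η =
      η⁻¹ ^ (∑ m : Fin n, om l ((m : ℕ) + 1) * (om l ((m : ℕ) + 1) - 1) / 2) *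
        rf n l η⁻¹ := by
  unfold rf
  rw [← Finset.prod_pow_eq_pow_sum, ← Finset.prod_mul_distrib]
  refine Finset.prod_congr rfl fun m _ => ?_
  rw [← Finset.sum_range_id, ← Finset.prod_pow_eq_pow_sum, ← Finset.prod_mul_distrib]
  exact Finset.prod_congr rfl fun s _ => aux_factor η hη0 s

lemma aux_cross (η a b : ℂ) (hη0 : η ≠ 0) (c : ℂ) :
    (a - η * b) / c = η * ((η⁻¹ * a - b) / c) := by
  have h : η * (η⁻¹ * a - b) = a - η * b := by
    rw [mul_sub, ← mul_assoc, mul_inv_cancel₀ hη0, one_mul]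
  rw [← h, mul_div_assoc]

lemma aux_card_pairsLT (ℓ : ℕ) : (pairsLT ℓ).card = ℓ * (ℓ - 1) / 2 := by
  rw [pairsLT, Finset.card_filter, ← Finset.sum_range_id, Fintype.sum_prod_type,
    Finset.sum_comm]
  rw [← Fin.sum_univ_eq_sum_range (fun i => i)]
  refine Finset.sum_congr rfl fun b _ => ?_
  rw [← Finset.card_filter, Finset.filter_gt_eq_Iio, Fin.card_Iio]

lemma aux_Xf {n : ℕ} (x y : Fin n → ℂ) (m : ℕ) (u : ℂ) :
    Xf x y m u = u * Xf' y x m u := by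
  simp [Xf, Xf', mul_assoc]
/-- **Relation between `P_λ` and `P'_λ`.**
`P_λ(t;x;y;η) = η^{ℓ(ℓ−1)/2 − ∑_m ω_{m,λ}(ω_{m,λ}−1)/2} · t_1⋯t_ℓ · P'_λ(t;y;x;η^{−1})`. -/
theorem P_P'_relation (ℓ n : ℕ) (x y : Fin n → ℂ) (η : ℂ) (hη0 : η ≠ 0)
    (hη : ∀ s : ℕ, 1 ≤ s → s ≤ ℓ → η ^ s ≠ 1)
    (lam : Fin ℓ → ℕ) (hlam : lam ∈ PlnF ℓ n)
    (t : Fin ℓ → ℂ) (ht : Function.Injective t) :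
    Pp lam t x y η =
      η ^ (((ℓ * (ℓ - 1) / 2 : ℕ) : ℤ) -
            ((∑ m : Fin n, om lam ((m : ℕ) + 1) * (om lam ((m : ℕ) + 1) - 1) / 2 : ℕ) : ℤ)) *
        (∏ a, t a) * Pp' lam t y x η⁻¹ := by
  have Kcard : (pairsLT ℓ).card = ℓ * (ℓ - 1) / 2 := aux_card_pairsLT ℓ
  set B : ℕ := ∑ m : Fin n, om lam ((m : ℕ) + 1) * (om lam ((m : ℕ) + 1) - 1) / 2 with hB
  have hsum : (∑ σ : Equiv.Perm (Fin ℓ),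
      (∏ a, Xf x y (lam a) (t (σ a))) *
        ∏ p ∈ pairsLT ℓ, (t (σ p.1) - η * t (σ p.2)) / (t (σ p.1) - t (σ p.2)))
      = η ^ (ℓ * (ℓ - 1) / 2) * (∏ a, t a) *
        ∑ σ : Equiv.Perm (Fin ℓ),
          (∏ a, Xf' y x (lam a) (t (σ a))) *
            ∏ p ∈ pairsLT ℓ, (η⁻¹ * t (σ p.1) - t (σ p.2)) / (t (σ p.1) - t (σ p.2)) := by
    rw [Finset.mul_sum]
    refine Finset.sum_congr rfl fun σ _ => ?_
    have h1 : (∏ a, Xf x y (lam a) (t (σ a)))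
        = (∏ a, t a) * ∏ a, Xf' y x (lam a) (t (σ a)) := by
      rw [← Equiv.prod_comp σ t, ← Finset.prod_mul_distrib]
      exact Finset.prod_congr rfl fun a _ => aux_Xf x y (lam a) (t (σ a))
    have h2 : (∏ p ∈ pairsLT ℓ, (t (σ p.1) - η * t (σ p.2)) / (t (σ p.1) - t (σ p.2)))
        = η ^ (ℓ * (ℓ - 1) / 2) *
          ∏ p ∈ pairsLT ℓ, (η⁻¹ * t (σ p.1) - t (σ p.2)) / (t (σ p.1) - t (σ p.2)) := by
      rw [← Kcard, ← Finset.prod_const, ← Finset.prod_mul_distrib]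
      exact Finset.prod_congr rfl fun p _ => aux_cross η _ _ hη0 _
    rw [h1, h2]; ring
  rw [Pp, Pp', aux_rf n lam η hη0, ← hB, hsum,
    zpow_sub₀ hη0, zpow_natCast, zpow_natCast, div_eq_mul_inv, ← inv_pow]
  ring
end
end
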